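/- For all natural numbers k and l, the following identity holds: Σ_{j=0}^{l+1} [l+1 choose j]_q (-1)^{j+1} [k+j+1]_q a*_{k+j} q^{j(j-1)/2 - l(k+j) - k} = Σ_{j=0}^{k+1} [k+1 choose j]_q (-1)^j [l+j+1]_q a_{l+j} q^{(j-1)(j-2)/2}. -/

import Mathlib

open Finset

/-- The q-Pochhammer symbol `(a;q)_n = ∏_{j=0}^{n-1} (1 - a q^j)`. -/
def qPoch {F : Type*} [Field F] (q a : F) (n : ℕ) : F :=
  ∏ j ∈ Finset.range n, (1 - a * q ^ j)

/-- The q-binomial coefficient `[n choose i]_q`, equal to 0 when `i > n`. -/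
def qBinom {F : Type*} [Field F] (q : F) (n i : ℕ) : F :=
  if i ≤ n then qPoch q q n / (qPoch q q i * qPoch q q (n - i)) else 0

/-- The q-integer `[n]_q = (1-q^n)/(1-q)`. -/
def qInt {F : Type*} [Field F] (q : F) (n : ℕ) : F := (1 - q ^ n) / (1 - q)

/-- The q-dual sequence `a*_n = ∑_{i=0}^n (-1)^i [n choose i]_q q^{i(i-1)/2} a_i`. -/
def qDual {F : Type*} [Field F] (q : F) (a : ℕ → F) (n : ℕ) : F :=
  ∑ i ∈ Finset.range (n + 1), (-1 : F) ^ i * qBinom q n i * q ^ (i.choose 2) * a i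

/-!
Expand `a*_{k+j}` and use the absorption identity
`[N+1]_q [N choose i]_q = [i+1]_q [N+1 choose i+1]_q`: the coefficient of `a_i` on the left
becomes the alternating sum `∑_j (-1)^j q^{C(j,2) - (n-1) j} [n choose j]_q [N+j choose M]_q`
with `n = l+1`, `N = k+1`, `M = i+1`. The q-Pascal rule, applied to both binomials, shows that
this sum is `-q^{N+1-M}` times the same sum for `(n-1, M-1)`, so it equals
`(-1)^n q^{n(N+1-M) + C(n,2)} [N choose M-n]_q`. This vanishes unless `i = l + j` with
`0 ≤ j ≤ k+1`, and the surviving terms are those on the right.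
-/

section QBinomial

variable {F : Type*} [Field F] {q : F}

lemma one_sub_pow_ne_zero_of_pow_ne_one (hq : ∀ m : ℕ, 0 < m → q ^ m ≠ 1) {m : ℕ}
    (hm : 0 < m) : 1 - q ^ m ≠ 0 :=
  sub_ne_zero.2 (hq m hm).symm

lemma qPoch_zero (a : F) : qPoch q a 0 = 1 :=
  prod_range_zero _

lemma qPoch_succ (n : ℕ) : qPoch q q (n + 1) = qPoch q q n * (1 - q ^ (n + 1)) := by
  rw [qPoch, prod_range_succ, ← pow_succ', qPoch]

lemma qPoch_ne_zero (hq : ∀ m : ℕ, 0 < m → q ^ m ≠ 1) (n : ℕ) : qPoch q q n ≠ 0 := by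
  induction n with
  | zero => exact qPoch_zero q ▸ one_ne_zero
  | succ n ih =>
    rw [qPoch_succ]
    exact mul_ne_zero ih (one_sub_pow_ne_zero_of_pow_ne_one hq n.succ_pos)

lemma qInt_ne_zero (hq : ∀ m : ℕ, 0 < m → q ^ m ≠ 1) {n : ℕ} (hn : 0 < n) :
    qInt q n ≠ 0 :=
  div_ne_zero (one_sub_pow_ne_zero_of_pow_ne_one hq hn)
    (by simpa using one_sub_pow_ne_zero_of_pow_ne_one hq one_pos)

lemma qBinom_zero_right (hq : ∀ m : ℕ, 0 < m → q ^ m ≠ 1) (n : ℕ) : qBinom q n 0 = 1 := by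
  rw [qBinom, if_pos n.zero_le, Nat.sub_zero, qPoch_zero, one_mul]
  exact div_self (qPoch_ne_zero hq n)

lemma qBinom_self (hq : ∀ m : ℕ, 0 < m → q ^ m ≠ 1) (n : ℕ) : qBinom q n n = 1 := by
  rw [qBinom, if_pos le_rfl, Nat.sub_self, qPoch_zero, mul_one]
  exact div_self (qPoch_ne_zero hq n)

lemma qBinom_of_lt {n i : ℕ} (h : n < i) : qBinom q n i = 0 :=
  if_neg h.not_ge

lemma qBinom_succ_add_succ (hq : ∀ m : ℕ, 0 < m → q ^ m ≠ 1) (i d : ℕ) :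
    qBinom q (i + 1 + d + 1) (i + 1) =
      qBinom q (i + 1 + d) (i + 1) + q ^ (d + 1) * qBinom q (i + 1 + d) i := by
  simp only [qBinom, if_pos (show i + 1 ≤ i + 1 + d + 1 by omega),
    if_pos (show i + 1 ≤ i + 1 + d by omega), if_pos (show i ≤ i + 1 + d by omega),
    show i + 1 + d + 1 - (i + 1) = d + 1 by omega, show i + 1 + d - (i + 1) = d by omega,
    show i + 1 + d - i = d + 1 by omega, qPoch_succ]
  have := qPoch_ne_zero hq i
  have := qPoch_ne_zero hq d
  have := one_sub_pow_ne_zero_of_pow_ne_one hq (Nat.succ_pos i)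
  have := one_sub_pow_ne_zero_of_pow_ne_one hq (Nat.succ_pos d)
  field_simp
  ring

lemma qInt_mul_qBinom (hq : ∀ m : ℕ, 0 < m → q ^ m ≠ 1) (N m : ℕ) :
    qInt q (N + 1) * qBinom q N m = qInt q (m + 1) * qBinom q (N + 1) (m + 1) := by
  rcases le_or_gt m N with h | h
  · obtain ⟨d, rfl⟩ := Nat.exists_eq_add_of_le h
    simp only [qBinom, if_pos h, if_pos (Nat.succ_le_succ h), Nat.add_sub_cancel_left,
      show m + d + 1 - (m + 1) = d by omega, qInt, qPoch_succ]
    have := qPoch_ne_zero hq m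
    have := qPoch_ne_zero hq d
    have := one_sub_pow_ne_zero_of_pow_ne_one hq (Nat.succ_pos m)
    have : (1 : F) - q ≠ 0 := by simpa using one_sub_pow_ne_zero_of_pow_ne_one hq one_pos
    field_simp
  · rw [qBinom_of_lt h, qBinom_of_lt (Nat.succ_lt_succ h), mul_zero, mul_zero]

end QBinomial

section QBinomialInt

variable {F : Type*} [Field F] {q : F}

/-- `[n choose i]_q` extended by zero to negative `i`, so that the q-Pascal rule
`qBinomInt_succ` holds for every `i : ℤ`. -/
def qBinomInt (q : F) (n : ℕ) (i : ℤ) : F := if 0 ≤ i then qBinom q n i.toNat else 0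

lemma qBinomInt_natCast (n i : ℕ) : qBinomInt q n i = qBinom q n i := by
  rw [qBinomInt, if_pos i.cast_nonneg, Int.toNat_natCast]

lemma qBinomInt_of_neg {n : ℕ} {i : ℤ} (h : i < 0) : qBinomInt q n i = 0 :=
  if_neg h.not_ge

lemma qBinomInt_succ (hq : ∀ m : ℕ, 0 < m → q ^ m ≠ 1) (n : ℕ) (i : ℤ) :
    qBinomInt q (n + 1) i = qBinomInt q n i + q ^ ((n : ℤ) + 1 - i) * qBinomInt q n (i - 1) := by
  obtain h | ⟨i, rfl⟩ := lt_or_ge i 0 |>.imp_right Int.eq_ofNat_of_zero_le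
  · rw [qBinomInt_of_neg h, qBinomInt_of_neg h, qBinomInt_of_neg (by omega), mul_zero, add_zero]
  cases i with
  | zero =>
    rw [qBinomInt_natCast, qBinomInt_natCast, Nat.cast_zero, zero_sub,
      qBinomInt_of_neg neg_one_lt_zero, mul_zero, add_zero, qBinom_zero_right hq,
      qBinom_zero_right hq]
  | succ i =>
    rw [qBinomInt_natCast, qBinomInt_natCast, Nat.cast_succ, add_sub_cancel_right,
      qBinomInt_natCast]
    rcases lt_trichotomy (i + 1) (n + 1) with h | h | h
    · obtain ⟨d, rfl⟩ : ∃ d, n = i + 1 + d := ⟨n - (i + 1), by omega⟩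
      rw [show ((i + 1 + d : ℕ) : ℤ) + 1 - (i + 1) = (d + 1 : ℕ) by push_cast; ring,
        zpow_natCast]
      exact qBinom_succ_add_succ hq i d
    · obtain rfl : i = n := by omega
      rw [qBinom_self hq, qBinom_of_lt i.lt_succ_self, qBinom_self hq,
        sub_self, zpow_zero, zero_add, one_mul]
    · rw [qBinom_of_lt h, qBinom_of_lt (by omega), qBinom_of_lt (by omega), mul_zero, add_zero]

end QBinomialInt

lemma Nat.cast_choose_two_succ (j : ℕ) : ((j + 1).choose 2 : ℤ) = j.choose 2 + j := by
  rw [Nat.choose_succ_succ', Nat.choose_one_right, Nat.cast_add, add_comm]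

lemma Nat.two_mul_cast_choose_two (n : ℕ) : 2 * (n.choose 2 : ℤ) = n * (n - 1) := by
  induction n with
  | zero => simp
  | succ n ih => rw [Nat.cast_choose_two_succ]; push_cast; linear_combination ih

section QAltSum

variable {F : Type*} [Field F] {q : F}

def qAltSum (q : F) (n N : ℕ) (M : ℤ) : F :=
  ∑ j ∈ range (n + 1),
    (-1) ^ j * q ^ ((j.choose 2 : ℤ) - ((n : ℤ) - 1) * j) * qBinom q n j * qBinomInt q (N + j) M

lemma qAltSum_succ (hq0 : q ≠ 0) (hq : ∀ m : ℕ, 0 < m → q ^ m ≠ 1) (n N : ℕ) (M : ℤ) :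
    qAltSum q (n + 1) N M = -q ^ ((N : ℤ) + 1 - M) * qAltSum q n N (M - 1) := by
  let w (j : ℕ) : F := (-1) ^ j * q ^ ((j.choose 2 : ℤ) - n * j)
  have hsplit : qAltSum q (n + 1) N M =
      ∑ j ∈ range (n + 2), w j * qBinomInt q n j * qBinomInt q (N + j) M +
      ∑ j ∈ range (n + 2), w j * q ^ ((n : ℤ) + 1 - j) * qBinomInt q n (j - 1) *
        qBinomInt q (N + j) M := by
    rw [qAltSum, ← sum_add_distrib]
    refine sum_congr rfl fun j _ => ?_
    rw [← qBinomInt_natCast, qBinomInt_succ hq, Nat.cast_succ, add_sub_cancel_right]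
    ring
  have hlast : ∑ j ∈ range (n + 2), w j * qBinomInt q n j * qBinomInt q (N + j) M =
      ∑ j ∈ range (n + 1), w j * qBinom q n j * qBinomInt q (N + j) M := by
    rw [sum_range_succ, qBinomInt_natCast, qBinom_of_lt n.lt_succ_self, mul_zero, zero_mul,
      add_zero]
    simp only [qBinomInt_natCast]
  have hfirst : ∑ j ∈ range (n + 2), w j * q ^ ((n : ℤ) + 1 - j) * qBinomInt q n (j - 1) *
        qBinomInt q (N + j) M =
      ∑ j ∈ range (n + 1), w (j + 1) * q ^ ((n : ℤ) + 1 - (j + 1 : ℕ)) * qBinom q n j *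
        qBinomInt q (N + j + 1) M := by
    rw [sum_range_succ', Nat.cast_zero, zero_sub, qBinomInt_of_neg neg_one_lt_zero, mul_zero,
      zero_mul, add_zero]
    simp only [Nat.cast_succ, add_sub_cancel_right, qBinomInt_natCast, add_assoc]
  rw [hsplit, hlast, hfirst, ← sum_add_distrib, qAltSum, mul_sum]
  refine sum_congr rfl fun j _ => ?_
  have hw : w (j + 1) * q ^ ((n : ℤ) + 1 - (j + 1 : ℕ)) = -w j := by
    simp only [w, pow_succ, mul_assoc, ← zpow_add₀ hq0, Nat.cast_choose_two_succ]
    push_cast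
    ring_nf
  have hpow : w j * q ^ ((N + j : ℕ) + 1 - M : ℤ) =
      (-1) ^ j * q ^ ((N : ℤ) + 1 - M) * q ^ ((j.choose 2 : ℤ) - ((n : ℤ) - 1) * j) := by
    simp only [w, mul_assoc, ← zpow_add₀ hq0]
    push_cast
    ring_nf
  rw [qBinomInt_succ hq (N + j) M]
  linear_combination qBinom q n j * (qBinomInt q (N + j) M +
      q ^ (((N + j : ℕ) : ℤ) + 1 - M) * qBinomInt q (N + j) (M - 1)) * hw -
    (qBinom q n j * qBinomInt q (N + j) (M - 1)) * hpow

lemma qAltSum_eq (hq0 : q ≠ 0) (hq : ∀ m : ℕ, 0 < m → q ^ m ≠ 1) (n N : ℕ) (M : ℤ) :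
    qAltSum q n N M =
      (-1) ^ n * q ^ ((n : ℤ) * ((N : ℤ) + 1 - M) + n.choose 2) * qBinomInt q N (M - n) := by
  induction n generalizing M with
  | zero => simp [qAltSum, qBinom_zero_right hq]
  | succ n ih =>
    have hexp : q ^ ((N : ℤ) + 1 - M) * q ^ ((n : ℤ) * (N + 1 - (M - 1)) + n.choose 2) =
        q ^ (((n + 1 : ℕ) : ℤ) * (N + 1 - M) + (n + 1).choose 2) := by
      rw [← zpow_add₀ hq0, Nat.cast_choose_two_succ]
      push_cast
      ring_nf
    rw [qAltSum_succ hq0 hq, ih, ← hexp, show M - 1 - n = M - (n + 1 : ℕ) by push_cast; ring]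
    ring

end QAltSum

lemma sub_one_mul_sub_two_div_two_eq (j k l : ℕ) :
    (((j : ℤ) - 1) * ((j : ℤ) - 2)) / 2 =
      ((l + j).choose 2 - k * (l + 1)) +
        ((l + 1 : ℕ) * ((k + 1 : ℕ) + 1 - ((l + j : ℕ) + 1)) + (l + 1).choose 2 : ℤ) := by
  refine Int.ediv_eq_of_eq_mul_left two_ne_zero ?_
  have h₁ := Nat.two_mul_cast_choose_two (l + j)
  have h₂ := Nat.two_mul_cast_choose_two (l + 1)
  push_cast at h₁ h₂ ⊢
  linear_combination -h₁ - h₂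

section Main

variable {F : Type*} [Field F] {q : F}

lemma qDual_eq_sum_range_of_le (a : ℕ → F) {n N : ℕ} (h : n ≤ N) :
    qDual q a n = ∑ i ∈ range (N + 1), (-1) ^ i * qBinom q n i * q ^ i.choose 2 * a i := by
  refine sum_subset (range_subset_range.2 (by omega)) fun i _ hi => ?_
  rw [qBinom_of_lt (by simpa using hi), mul_zero, zero_mul, zero_mul]

lemma sum_qDual_eq_sum_qAltSum (hq0 : q ≠ 0) (hq : ∀ m : ℕ, 0 < m → q ^ m ≠ 1)
    (a : ℕ → F) (k l : ℕ) :
    ∑ j ∈ range (l + 2), qBinom q (l + 1) j * (-1) ^ (j + 1) * qInt q (k + j + 1) *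
        qDual q a (k + j) * q ^ ((j.choose 2 : ℤ) - l * (k + j) - k) =
      ∑ i ∈ range (k + l + 2), (-1) ^ (i + 1) * qInt q (i + 1) * a i *
        q ^ ((i.choose 2 : ℤ) - k * (l + 1)) * qAltSum q (l + 1) (k + 1) (i + 1) := by
  calc _ = ∑ j ∈ range (l + 2), ∑ i ∈ range (k + l + 2),
          qBinom q (l + 1) j * (-1) ^ (j + 1) * qInt q (k + j + 1) *
            ((-1) ^ i * qBinom q (k + j) i * q ^ i.choose 2 * a i) *
            q ^ ((j.choose 2 : ℤ) - l * (k + j) - k) := by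
        refine sum_congr rfl fun j hj => ?_
        rw [qDual_eq_sum_range_of_le a (N := k + l + 1) (by simp at hj; omega), mul_sum, sum_mul]
    _ = _ := by
        rw [sum_comm]
        refine sum_congr rfl fun i _ => ?_
        rw [qAltSum, mul_sum]
        refine sum_congr rfl fun j _ => ?_
        have habsorb := qInt_mul_qBinom hq (k + j) i
        have hexp : q ^ i.choose 2 * q ^ ((j.choose 2 : ℤ) - l * (k + j) - k) =
            q ^ ((i.choose 2 : ℤ) - k * (l + 1)) *
              q ^ ((j.choose 2 : ℤ) - ((l + 1 : ℕ) - 1) * j) := by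
          rw [← zpow_natCast, ← zpow_add₀ hq0, ← zpow_add₀ hq0]
          push_cast
          ring_nf
        rw [show ((i : ℤ) + 1) = (i + 1 : ℕ) by push_cast; ring, qBinomInt_natCast,
          add_right_comm k 1 j]
        linear_combination
          (-1) ^ (i + j + 1) * a i * qBinom q (l + 1) j *
            q ^ ((j.choose 2 : ℤ) - l * (k + j) - k) * q ^ i.choose 2 * habsorb +
          (-1) ^ (i + j + 1) * a i * qBinom q (l + 1) j * qInt q (i + 1) *
            qBinom q (k + j + 1) (i + 1) * hexp

end Main

theorem stmt2 {F : Type*} [Field F] (q : F) (hq0 : q ≠ 0)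
    (hq : ∀ m : ℕ, 0 < m → q ^ m ≠ 1) (a : ℕ → F) (k l : ℕ) :
    ∑ j ∈ Finset.range (l + 2), qBinom q (l + 1) j * (-1 : F) ^ (j + 1) *
        qInt q (k + j + 1) * qDual q a (k + j) *
        q ^ ((j.choose 2 : ℤ) - (l : ℤ) * ((k : ℤ) + j) - (k : ℤ)) =
    ∑ j ∈ Finset.range (k + 2), qBinom q (k + 1) j * (-1 : F) ^ j *
        qInt q (l + j + 1) * a (l + j) *
        q ^ ((((j : ℤ) - 1) * ((j : ℤ) - 2)) / 2) := by
  simp_rw [sum_qDual_eq_sum_qAltSum hq0 hq, qAltSum_eq hq0 hq]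
  rw [show k + l + 2 = l + (k + 2) by omega, sum_range_add, sum_eq_zero, zero_add]
  · refine sum_congr rfl fun j _ => ?_
    have hsign : (-1 : F) ^ (l + j + 1) * (-1) ^ (l + 1) = (-1) ^ j := by
      rw [← pow_add, show l + j + 1 + (l + 1) = j + 2 * (l + 1) by ring, pow_add, pow_mul,
        neg_one_sq, one_pow, mul_one]
    rw [show ((l + j : ℕ) : ℤ) + 1 - (l + 1 : ℕ) = j by push_cast; ring, qBinomInt_natCast,
      sub_one_mul_sub_two_div_two_eq, zpow_add₀ hq0 (_ - _)]
    linear_combination qBinom q (k + 1) j * qInt q (l + j + 1) * a (l + j) *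
      q ^ (((l + j).choose 2 : ℤ) - k * (l + 1)) *
      q ^ ((l + 1 : ℕ) * ((k + 1 : ℕ) + 1 - ((l + j : ℕ) + 1)) + (l + 1).choose 2 : ℤ) *
      hsign
  · intro i hi
    rw [qBinomInt_of_neg (by simp at hi; omega), mul_zero, mul_zero]
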